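/- Let G be a connected graph with minimum degree at least 3. Then G has a spanning tree with at least v(G)/4 + 2 leaves, where v(G) is the number of vertices of G. -/

import Mathlib

/-!
Kleitman–West: grow a connected vertex set `D`, thought of as the internal vertices of a tree
spanning its closed neighbourhood `N[D]`, whose leaves are the vertices of `N[D] \ D`; a leaf is
*live* while it still has a neighbour outside `N[D]`. The potential `3|N[D]| - 4|D| - #live`
never decreases when `D` is enlarged by a live leaf with two outside neighbours, or by a live
leaf `u` together with its outside neighbour `w` when `w` has two outside neighbours, or
(otherwise) by `u` alone, which kills every live leaf adjacent to `w`; and the step that makes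
`D` dominating gains `2`. Minimum degree `3` gives a start of potential at least `6` (a star,
a double star, or `K₄`), so we reach a connected dominating set with `3n - 4|D| ≥ 8`. Hanging
every other vertex on a neighbour in `D` gives a spanning tree with `n - |D| ≥ n/4 + 2` leaves.
-/

open SimpleGraph

/-- Degree of a vertex (works without decidability assumptions). -/
noncomputable def ndeg {V : Type*} (G : SimpleGraph V) (v : V) : ℕ :=
  Nat.card (G.neighborSet v)

/-- Number of leaves (vertices of degree 1) of a graph. -/
noncomputable def numLeaves {V : Type*} (T : SimpleGraph V) : ℕ :=
  Nat.card {v : V | ndeg T v = 1}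

/-- A spanning tree of `G` is a tree `T ≤ G` on the same vertex set. -/
def IsSpanningTreeOf {V : Type*} (T G : SimpleGraph V) : Prop :=
  T ≤ G ∧ T.IsTree

/-- `maxLeaves G` is `u(G)`, the maximum number of leaves over all spanning trees. -/
noncomputable def maxLeaves {V : Type*} (G : SimpleGraph V) : ℕ :=
  sSup {n : ℕ | ∃ T : SimpleGraph V, IsSpanningTreeOf T G ∧ numLeaves T = n}

open Finset

namespace SimpleGraph

lemma ndeg_eq_degree {V : Type*} (G : SimpleGraph V) (v : V) [Fintype (G.neighborSet v)] :
    ndeg G v = G.degree v := by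
  rw [ndeg, Nat.card_eq_fintype_card, card_neighborSet_eq_degree]

lemma card_compl_le_numLeaves {V : Type*} [Fintype V] [DecidableEq V] {T : SimpleGraph V}
    {D : Finset V} (h : ∀ v ∉ D, ndeg T v = 1) :
    #Dᶜ ≤ numLeaves T := by
  rw [numLeaves, Nat.card_coe_set_eq, ← Set.ncard_coe_finset]
  exact Set.ncard_le_ncard (fun v hv => h v (by simpa using hv))

section

variable {V : Type*} {G : SimpleGraph V}

lemma induce_insert_connected [DecidableEq V] {D : Finset V} {d v : V}
    (hD : (G.induce (D : Set V)).Connected) (hd : d ∈ D) (hdv : G.Adj d v) :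
    (G.induce (insert v D : Finset V)).Connected := by
  have h := induce_union_connected hD.preconnected (induce_pair_connected_of_adj hdv).preconnected
    ⟨d, hd, Set.mem_insert d _⟩
  have hset : ((insert v D : Finset V) : Set V) = ↑D ∪ {d, v} := by
    ext x
    simp only [coe_insert, Set.mem_insert_iff, mem_coe, Set.mem_union, Set.mem_singleton_iff]
    grind
  rwa [hset]

/-- Hang each vertex outside `D` on a neighbour in `D` and take a spanning tree of the
result. -/
lemma exists_isTree_le_ndeg_eq_one {D : Finset V} (hD : (G.induce (D : Set V)).Connected)
    (hdom : ∀ v ∉ D, ∃ d ∈ D, G.Adj d v) :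
    ∃ T ≤ G, T.IsTree ∧ ∀ v ∉ D, ndeg T v = 1 := by
  choose! f hfD hf using hdom
  let H : SimpleGraph V :=
    fromRel fun x y => (x ∈ D ∧ y ∈ D ∧ G.Adj x y) ∨ (x ∉ D ∧ y = f x)
  have hHG : H ≤ G := by
    rintro x y ⟨-, (⟨-, -, h⟩ | ⟨hx, rfl⟩) | (⟨-, -, h⟩ | ⟨hy, rfl⟩)⟩
    exacts [h, (hf x hx).symm, h.symm, hf y hy]
  have hHnbr : ∀ v ∉ D, ∀ y, H.Adj v y ↔ y = f v := by
    intro v hv y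
    constructor
    · rintro ⟨-, (⟨h, -⟩ | ⟨-, rfl⟩) | (⟨-, h, -⟩ | ⟨hy, rfl⟩)⟩
      exacts [absurd h hv, rfl, absurd h hv, absurd (hfD y hy) hv]
    · rintro rfl
      exact ⟨fun h => hv (h ▸ hfD v hv), Or.inl (Or.inr ⟨hv, rfl⟩)⟩
  obtain ⟨⟨d₀, hd₀⟩⟩ := hD.nonempty
  have hreach : ∀ x, H.Reachable x d₀ := by
    let φ : G.induce (D : Set V) →g H :=
      ⟨Subtype.val, fun {a b} (h : G.Adj a b) => ⟨h.ne, Or.inl (Or.inl ⟨a.2, b.2, h⟩)⟩⟩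
    have hD' : ∀ x ∈ D, H.Reachable x d₀ := fun x hx =>
      (hD.preconnected ⟨x, hx⟩ ⟨d₀, hd₀⟩).map φ
    intro x
    by_cases hx : x ∈ D
    · exact hD' x hx
    · exact ((hHnbr x hx (f x)).2 rfl).reachable.trans (hD' _ (hfD x hx))
  have hH : H.Connected :=
    (connected_iff_exists_forall_reachable H).2 ⟨d₀, fun x => (hreach x).symm⟩
  obtain ⟨T, hTH, hT⟩ := hH.exists_isTree_le
  refine ⟨T, hTH.trans hHG, hT, fun v hv => ?_⟩
  have hsub : T.neighborSet v ⊆ {f v} := fun y hy => (hHnbr v hv y).1 (hTH hy)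
  have hne : (T.neighborSet v).Nonempty := by
    have hvf : v ≠ f v := fun h => hv (h ▸ hfD v hv)
    obtain ⟨p⟩ := hT.connected.preconnected v (f v)
    exact ⟨p.snd, p.adj_snd (Walk.not_nil_of_ne hvf)⟩
  rw [ndeg, hne.subset_singleton_iff.1 hsub, Nat.card_unique]

lemma induce_singleton_connected (v : V) : (G.induce (({v} : Finset V) : Set V)).Connected := by
  rw [coe_singleton, induce_singleton_eq_top]
  exact connected_top

end

variable {V : Type*} [Fintype V] [DecidableEq V] (G : SimpleGraph V) [DecidableRel G.Adj]

def closedNbhd (D : Finset V) : Finset V := {x | x ∈ D ∨ ∃ d ∈ D, G.Adj d x}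

def outsideNbrs (D : Finset V) (x : V) : Finset V := G.neighborFinset x \ G.closedNbhd D

def liveLeaves (D : Finset V) : Finset V :=
  {x ∈ G.closedNbhd D \ D | (G.outsideNbrs D x).Nonempty}

def leafPotential (D : Finset V) : ℤ := 3 * #(G.closedNbhd D) - 4 * #D - #(G.liveLeaves D)

variable {G} {D D' : Finset V} {u v w x y : V}

@[simp] lemma mem_closedNbhd : x ∈ G.closedNbhd D ↔ x ∈ D ∨ ∃ d ∈ D, G.Adj d x := by
  simp [closedNbhd]

@[simp] lemma mem_outsideNbrs : y ∈ G.outsideNbrs D x ↔ G.Adj x y ∧ y ∉ G.closedNbhd D := by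
  simp only [outsideNbrs, mem_sdiff, mem_neighborFinset]

lemma mem_liveLeaves :
    x ∈ G.liveLeaves D ↔ x ∈ G.closedNbhd D ∧ x ∉ D ∧ (G.outsideNbrs D x).Nonempty := by
  simp only [liveLeaves, mem_filter, mem_sdiff, and_assoc]

lemma subset_closedNbhd : D ⊆ G.closedNbhd D := fun _ hx => mem_closedNbhd.2 (Or.inl hx)

lemma mem_closedNbhd_of_adj (hu : u ∈ D) (h : G.Adj u x) : x ∈ G.closedNbhd D :=
  mem_closedNbhd.2 (Or.inr ⟨u, hu, h⟩)

lemma closedNbhd_mono (h : D ⊆ D') : G.closedNbhd D ⊆ G.closedNbhd D' := by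
  intro x
  simp only [mem_closedNbhd]
  exact Or.imp (@h x) fun ⟨d, hd, hdx⟩ => ⟨d, h hd, hdx⟩

lemma mem_closedNbhd_insert :
    x ∈ G.closedNbhd (insert v D) ↔ x ∈ G.closedNbhd D ∨ x = v ∨ G.Adj v x := by
  simp only [mem_closedNbhd, mem_insert, exists_eq_or_imp]
  grind

lemma card_closedNbhd_singleton : #(G.closedNbhd {v}) = G.degree v + 1 := by
  have : G.closedNbhd {v} = insert v (G.neighborFinset v) := by
    ext x
    simp only [mem_closedNbhd, mem_singleton, exists_eq_left, mem_insert, mem_neighborFinset]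
  rw [this, card_insert_of_notMem (by simp), card_neighborFinset_eq_degree]

lemma exists_adj_of_mem_closedNbhd (hx : x ∈ G.closedNbhd D) (hxD : x ∉ D) :
    ∃ d ∈ D, G.Adj d x :=
  (mem_closedNbhd.1 hx).resolve_left hxD

lemma liveLeaves_subset : G.liveLeaves D ⊆ G.closedNbhd D \ D := filter_subset _ _

lemma liveLeaves_eq_empty (h : G.closedNbhd D = univ) : G.liveLeaves D = ∅ := by
  ext x
  simp [mem_liveLeaves, Finset.Nonempty, h]

lemma leafPotential_eq_of_closedNbhd_eq_univ (h : G.closedNbhd D = univ) :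
    G.leafPotential D = 3 * #(G.closedNbhd D) - 4 * #D := by
  simp [leafPotential, liveLeaves_eq_empty h]

lemma two_mul_card_closedNbhd_sub_le_leafPotential :
    2 * #(G.closedNbhd D) - 3 * #D ≤ G.leafPotential D := by
  have h₁ := card_le_card (liveLeaves_subset (G := G) (D := D))
  have h₂ := card_sdiff_add_card_eq_card (subset_closedNbhd (G := G) (D := D))
  simp only [leafPotential]
  omega

/-- Every live leaf of `D'` is a live leaf of `D` or a new vertex of the closed neighbourhood,
and none of them lies in `Z`. -/
lemma leafPotential_add_le (hDD' : D ⊆ D') {Z : Finset V}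
    (hZ : Z ⊆ G.liveLeaves D ∪ (G.closedNbhd D' \ G.closedNbhd D))
    (hdead : ∀ z ∈ Z, z ∈ D' ∨ G.outsideNbrs D' z = ∅) :
    G.leafPotential D + 2 * (#(G.closedNbhd D') - #(G.closedNbhd D)) - 4 * (#D' - #D) + #Z ≤
      G.leafPotential D' := by
  have hSS' := closedNbhd_mono (G := G) hDD'
  have hsub : G.liveLeaves D' ⊆ (G.liveLeaves D ∪ (G.closedNbhd D' \ G.closedNbhd D)) \ Z := by
    intro x hx
    obtain ⟨hxS', hxD', y, hy⟩ := mem_liveLeaves.1 hx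
    refine mem_sdiff.2 ⟨?_, fun hxZ => ?_⟩
    · by_cases hxS : x ∈ G.closedNbhd D
      · refine mem_union_left _ (mem_liveLeaves.2 ⟨hxS, fun h => hxD' (hDD' h), y, ?_⟩)
        rw [mem_outsideNbrs] at hy ⊢
        exact ⟨hy.1, fun h => hy.2 (hSS' h)⟩
      · exact mem_union_right _ (mem_sdiff.2 ⟨hxS', hxS⟩)
    · rcases hdead x hxZ with h | h
      · exact hxD' h
      · simp [h] at hy
  have hdisj : Disjoint (G.liveLeaves D) (G.closedNbhd D' \ G.closedNbhd D) :=
    Finset.disjoint_left.2 fun x hx hx' =>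
      (mem_sdiff.1 hx').2 (mem_sdiff.1 (liveLeaves_subset hx)).1
  have h₁ := card_le_card hsub
  rw [card_sdiff_of_subset hZ, card_union_of_disjoint hdisj, card_sdiff_of_subset hSS'] at h₁
  have h₂ := card_le_card hZ
  have h₃ := card_le_card hSS'
  have h₄ := card_le_card hDD'
  rw [card_union_of_disjoint hdisj, card_sdiff_of_subset hSS'] at h₂
  simp only [leafPotential]
  omega

lemma card_le_card_closedNbhd_sub {s : Finset V}
    (hs : ∀ x ∈ s, x ∈ G.closedNbhd D' ∧ x ∉ G.closedNbhd D) (h : D ⊆ D') :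
    (#s : ℤ) ≤ #(G.closedNbhd D') - #(G.closedNbhd D) := by
  have h₁ := card_le_card (show s ⊆ G.closedNbhd D' \ G.closedNbhd D from
    fun x hx => mem_sdiff.2 (hs x hx))
  have h₂ := card_le_card (closedNbhd_mono (G := G) h)
  rw [card_sdiff_of_subset (closedNbhd_mono h)] at h₁
  omega

variable (G) in
def IsLeafyExtension (D D' : Finset V) : Prop :=
  D ⊂ D' ∧ (G.induce (D' : Set V)).Connected ∧ G.leafPotential D ≤ G.leafPotential D' ∧
    (G.closedNbhd D' = univ → G.leafPotential D + 2 ≤ G.leafPotential D')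

lemma isLeafyExtension_insert_of_one_lt_card_outsideNbrs
    (hD : (G.induce (D : Set V)).Connected) (hv : v ∈ G.liveLeaves D)
    (h2 : 1 < #(G.outsideNbrs D v)) : G.IsLeafyExtension D (insert v D) := by
  obtain ⟨hvS, hvD, -⟩ := mem_liveLeaves.1 hv
  obtain ⟨d, hd, hdv⟩ := exists_adj_of_mem_closedNbhd hvS hvD
  have hDD' : D ⊆ insert v D := subset_insert _ _
  have hgrow := card_le_card_closedNbhd_sub (s := G.outsideNbrs D v) (fun y hy =>
    ⟨mem_closedNbhd_of_adj (mem_insert_self v D) (mem_outsideNbrs.1 hy).1,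
      (mem_outsideNbrs.1 hy).2⟩) hDD'
  have hpot := leafPotential_add_le (Z := {v}) hDD'
    (singleton_subset_iff.2 (mem_union_left _ hv))
    fun z hz => Or.inl (mem_singleton.1 hz ▸ mem_insert_self v D)
  have hA := card_pos.2 ⟨v, hv⟩
  rw [card_insert_of_notMem hvD, card_singleton] at hpot
  refine ⟨ssubset_insert hvD, induce_insert_connected hD hd hdv, by omega, fun hdom => ?_⟩
  rw [leafPotential_eq_of_closedNbhd_eq_univ hdom, card_insert_of_notMem hvD]
  simp only [leafPotential]
  omega

lemma isLeafyExtension_insert_insert_of_one_lt_card_outsideNbrs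
    (hD : (G.induce (D : Set V)).Connected) (hu : u ∈ G.liveLeaves D)
    (hw : w ∈ G.outsideNbrs D u) (h2 : 1 < #(G.outsideNbrs D w)) :
    G.IsLeafyExtension D (insert w (insert u D)) := by
  obtain ⟨huS, huD, -⟩ := mem_liveLeaves.1 hu
  obtain ⟨huw, hwS⟩ := mem_outsideNbrs.1 hw
  obtain ⟨d, hd, hdu⟩ := exists_adj_of_mem_closedNbhd huS huD
  have hwu : w ∉ insert u D := by
    simp only [mem_insert, not_or]
    exact ⟨huw.ne', fun h => hwS (subset_closedNbhd h)⟩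
  have hDD' : D ⊆ insert w (insert u D) := (subset_insert _ _).trans (subset_insert _ _)
  have hcardD : #(insert w (insert u D)) = #D + 2 := by
    rw [card_insert_of_notMem hwu, card_insert_of_notMem huD]
  have hu' : u ∈ insert w (insert u D) := mem_insert_of_mem (mem_insert_self u D)
  have hw' : w ∈ insert w (insert u D) := mem_insert_self w _
  have hgrow := card_le_card_closedNbhd_sub (s := insert w (G.outsideNbrs D w)) (by
    simp only [mem_insert, forall_eq_or_imp, mem_outsideNbrs]
    exact ⟨⟨mem_closedNbhd_of_adj hu' huw, hwS⟩,
      fun y hy => ⟨mem_closedNbhd_of_adj hw' hy.1, hy.2⟩⟩) hDD'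
  rw [card_insert_of_notMem (by simp)] at hgrow
  have hpot := leafPotential_add_le (Z := {u, w}) hDD' (by
    simp only [insert_subset_iff, singleton_subset_iff, mem_union, mem_sdiff]
    exact ⟨Or.inl hu, Or.inr ⟨mem_closedNbhd_of_adj hu' huw, hwS⟩⟩)
    fun z hz => Or.inl (insert_subset hu' (singleton_subset_iff.2 hw') hz)
  have hA := card_pos.2 ⟨u, hu⟩
  rw [hcardD, card_pair huw.ne] at hpot
  refine ⟨(ssubset_insert huD).trans_subset (subset_insert _ _),
    induce_insert_connected (induce_insert_connected hD hd hdu) (mem_insert_self u D) huw,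
    by omega, fun hdom => ?_⟩
  rw [leafPotential_eq_of_closedNbhd_eq_univ hdom, hcardD]
  simp only [leafPotential]
  omega

lemma closedNbhd_insert_of_outsideNbrs_eq_singleton (hu : u ∈ G.closedNbhd D)
    (h : G.outsideNbrs D u = {w}) : G.closedNbhd (insert u D) = insert w (G.closedNbhd D) := by
  have hw : w ∈ G.outsideNbrs D u := h ▸ mem_singleton_self w
  ext x
  rw [mem_closedNbhd_insert, mem_insert]
  constructor
  · rintro (hx | rfl | hux)
    · exact Or.inr hx
    · exact Or.inr hu
    · by_cases hx : x ∈ G.closedNbhd D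
      · exact Or.inr hx
      · exact Or.inl (mem_singleton.1 (h ▸ mem_outsideNbrs.2 ⟨hux, hx⟩))
  · rintro (rfl | hx)
    exacts [Or.inr (Or.inr (mem_outsideNbrs.1 hw).1), Or.inl hx]

lemma outsideNbrs_eq_empty_of_card_le_one {z : V} (hz : #(G.outsideNbrs D z) ≤ 1)
    (hzw : w ∈ G.outsideNbrs D z) (hDD' : D ⊆ D') (hw : w ∈ G.closedNbhd D') :
    G.outsideNbrs D' z = ∅ := by
  refine eq_empty_of_forall_notMem fun y hy => ?_
  obtain ⟨hzy, hyS'⟩ := mem_outsideNbrs.1 hy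
  have hy' : y ∈ G.outsideNbrs D z :=
    mem_outsideNbrs.2 ⟨hzy, fun h => hyS' (closedNbhd_mono hDD' h)⟩
  exact hyS' (card_le_one.1 hz w hzw y hy' ▸ hw)

/-- When every live leaf has a single outside neighbour, promoting `u` makes its outside
neighbour `w` a leaf and kills every live leaf adjacent to `w`; there are at least two of them,
and at least three when nothing is left outside. -/
lemma isLeafyExtension_insert_of_card_outsideNbrs_le_one
    (hD : (G.induce (D : Set V)).Connected) (hdeg : 3 ≤ G.degree w)
    (hu : u ∈ G.liveLeaves D) (hw : w ∈ G.outsideNbrs D u) (hw1 : #(G.outsideNbrs D w) ≤ 1)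
    (huniq : ∀ z ∈ G.liveLeaves D, #(G.outsideNbrs D z) ≤ 1) :
    G.IsLeafyExtension D (insert u D) := by
  obtain ⟨huS, huD, -⟩ := mem_liveLeaves.1 hu
  obtain ⟨huw, hwS⟩ := mem_outsideNbrs.1 hw
  obtain ⟨d, hd, hdu⟩ := exists_adj_of_mem_closedNbhd huS huD
  have hS' : G.closedNbhd (insert u D) = insert w (G.closedNbhd D) :=
    closedNbhd_insert_of_outsideNbrs_eq_singleton huS
      (eq_singleton_iff_unique_mem.2 ⟨hw, fun x hx => card_le_one.1 (huniq u hu) x hx w hw⟩)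
  set Z := G.neighborFinset w \ G.outsideNbrs D w
  have hZ : ∀ z ∈ Z, w ∈ G.outsideNbrs D z := fun z hz =>
    mem_outsideNbrs.2 ⟨(mem_neighborFinset _ _ _).1 (mem_sdiff.1 hz).1 |>.symm, hwS⟩
  have hZA : Z ⊆ G.liveLeaves D := fun z hz => by
    obtain ⟨hwz, hz'⟩ := mem_sdiff.1 hz
    rw [mem_neighborFinset] at hwz
    have hzS : z ∈ G.closedNbhd D := by_contra fun h => hz' (mem_outsideNbrs.2 ⟨hwz, h⟩)
    exact mem_liveLeaves.2 ⟨hzS, fun h => hwS (mem_closedNbhd_of_adj h hwz.symm), w, hZ z hz⟩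
  have hcardZ : #Z + #(G.outsideNbrs D w) = G.degree w := by
    rw [← card_neighborFinset_eq_degree]
    exact card_sdiff_add_card_eq_card fun y hy => by simpa using (mem_outsideNbrs.1 hy).1
  have hpot := leafPotential_add_le (subset_insert u D) (hZA.trans subset_union_left)
    fun z hz => Or.inr (outsideNbrs_eq_empty_of_card_le_one (huniq z (hZA hz)) (hZ z hz)
      (subset_insert u D) (hS' ▸ mem_insert_self w _))
  have hA := card_le_card hZA
  rw [hS', card_insert_of_notMem hwS, card_insert_of_notMem huD] at hpot
  refine ⟨ssubset_insert huD, induce_insert_connected hD hd hdu, by omega, fun hdom => ?_⟩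
  have hw0 : G.outsideNbrs D w = ∅ := by
    refine eq_empty_of_forall_notMem fun x hx => ?_
    obtain ⟨hwx, hxS⟩ := mem_outsideNbrs.1 hx
    rcases mem_insert.1 (hS' ▸ hdom ▸ mem_univ x) with rfl | h
    exacts [G.irrefl hwx, hxS h]
  rw [hw0, card_empty] at hcardZ
  rw [leafPotential_eq_of_closedNbhd_eq_univ hdom, hS', card_insert_of_notMem hwS,
    card_insert_of_notMem huD]
  simp only [leafPotential]
  omega

lemma liveLeaves_nonempty (hG : G.Connected) (hD : D.Nonempty) (hS : G.closedNbhd D ≠ univ) :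
    (G.liveLeaves D).Nonempty := by
  obtain ⟨d, hd⟩ := hD
  obtain ⟨y, hy⟩ : ∃ y, y ∉ G.closedNbhd D := by
    by_contra! h
    exact hS (eq_univ_of_forall h)
  obtain ⟨e, -, hx, hy⟩ :=
    (hG d y).some.exists_boundary_dart (G.closedNbhd D : Set V) (subset_closedNbhd hd) hy
  have hxD : e.fst ∉ D := fun h => hy (mem_closedNbhd_of_adj h e.adj)
  exact ⟨e.fst, mem_liveLeaves.2 ⟨hx, hxD, e.snd, mem_outsideNbrs.2 ⟨e.adj, hy⟩⟩⟩

lemma exists_isLeafyExtension (hG : G.Connected) (hdeg : ∀ v, 3 ≤ G.degree v)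
    (hD : (G.induce (D : Set V)).Connected) (hS : G.closedNbhd D ≠ univ) :
    ∃ D', G.IsLeafyExtension D D' := by
  by_cases h : ∃ v ∈ G.liveLeaves D, 1 < #(G.outsideNbrs D v)
  · obtain ⟨v, hv, h2⟩ := h
    exact ⟨_, isLeafyExtension_insert_of_one_lt_card_outsideNbrs hD hv h2⟩
  push Not at h
  obtain ⟨⟨d, hd⟩⟩ := hD.nonempty
  obtain ⟨u, hu⟩ := liveLeaves_nonempty hG ⟨d, hd⟩ hS
  obtain ⟨w, hw⟩ := (mem_liveLeaves.1 hu).2.2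
  by_cases hw2 : 1 < #(G.outsideNbrs D w)
  · exact ⟨_, isLeafyExtension_insert_insert_of_one_lt_card_outsideNbrs hD hu hw hw2⟩
  · exact ⟨_, isLeafyExtension_insert_of_card_outsideNbrs_le_one hD (hdeg w) hu hw
      (not_lt.1 hw2) h⟩

lemma exists_connected_closedNbhd_eq_univ {D : Finset V} (hG : G.Connected)
    (hdeg : ∀ v, 3 ≤ G.degree v)
    (hD : (G.induce (D : Set V)).Connected) :
    ∃ D' : Finset V, (G.induce (D' : Set V)).Connected ∧ G.closedNbhd D' = univ ∧
      G.leafPotential D ≤ G.leafPotential D' ∧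
      (G.closedNbhd D ≠ univ → G.leafPotential D + 2 ≤ G.leafPotential D') := by
  by_cases hS : G.closedNbhd D = univ
  · exact ⟨D, hD, hS, le_rfl, fun h => absurd hS h⟩
  obtain ⟨D₁, hDD₁, hD₁, hle, hfin⟩ := exists_isLeafyExtension hG hdeg hD hS
  obtain ⟨D', hD', hdom, hle', hfin'⟩ := exists_connected_closedNbhd_eq_univ hG hdeg hD₁
  refine ⟨D', hD', hdom, hle.trans hle', fun _ => ?_⟩
  by_cases hS₁ : G.closedNbhd D₁ = univ
  · linarith [hfin hS₁]
  · linarith [hfin' hS₁]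
termination_by Fintype.card V - #D
decreasing_by
  have := card_lt_card hDD₁
  have := card_le_univ D₁
  omega

lemma six_le_leafPotential (h : 6 + 3 * #D ≤ 2 * #(G.closedNbhd D)) :
    6 ≤ G.leafPotential D ∧ (G.closedNbhd D = univ → 8 ≤ G.leafPotential D) := by
  refine ⟨by linarith [two_mul_card_closedNbhd_sub_le_leafPotential (G := G) (D := D)],
    fun hdom => ?_⟩
  rw [leafPotential_eq_of_closedNbhd_eq_univ hdom]
  omega

lemma eq_or_eq_or_eq_of_adj_of_degree_eq_three {a b c : V} (h3 : G.degree x = 3)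
    (ha : G.Adj x a) (hb : G.Adj x b) (hc : G.Adj x c) (hab : a ≠ b) (hac : a ≠ c)
    (hbc : b ≠ c) :
    ∀ ⦃y⦄, G.Adj x y → y = a ∨ y = b ∨ y = c := by
  have hsub : ({a, b, c} : Finset V) ⊆ G.neighborFinset x := by
    intro z
    simp only [mem_insert, mem_singleton, mem_neighborFinset]
    rintro (rfl | rfl | rfl) <;> assumption
  have hN := eq_of_subset_of_card_le hsub (by
    rw [card_neighborFinset_eq_degree, h3, card_eq_three.2 ⟨a, b, c, hab, hac, hbc, rfl⟩])
  intro y hy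
  have hy' := (G.mem_neighborFinset x y).2 hy
  rw [← hN] at hy'
  simpa using hy'

/-- Consequently every component of a cubic graph whose edges all lie in triangles is a `K₄`. -/
lemma adj_of_adj_of_adj (h3 : ∀ v, G.degree v = 3)
    (htri : ∀ x y, G.Adj x y → ∃ z, G.Adj x z ∧ G.Adj y z)
    (hvu : G.Adj v u) (huw : G.Adj u w) (hwv : w ≠ v) : G.Adj v w := by
  by_contra hvw
  obtain ⟨t, hut, hvt⟩ := htri u v hvu.symm
  obtain ⟨t', hut', hwt'⟩ := htri u w huw
  have htw : t ≠ w := by rintro rfl; exact hvw hvt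
  have hNu := eq_or_eq_or_eq_of_adj_of_degree_eq_three (h3 u) hvu.symm huw hut hwv.symm hvt.ne
    htw.symm
  have hwt : G.Adj w t := by
    rcases hNu hut' with rfl | rfl | rfl
    exacts [absurd hwt'.symm hvw, absurd hwt' G.irrefl, hwt']
  have hNt := eq_or_eq_or_eq_of_adj_of_degree_eq_three (h3 t) hut.symm hvt.symm hwt.symm
    hvu.ne' huw.ne hwv.symm
  obtain ⟨s, hs, hsut⟩ :=
    exists_mem_notMem_of_card_lt_card (s := {u, t}) (t := G.neighborFinset v)
    (by rw [card_neighborFinset_eq_degree, h3]; exact (card_le_two).trans_lt (by norm_num))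
  rw [mem_neighborFinset] at hs
  simp only [mem_insert, mem_singleton, not_or] at hsut
  obtain ⟨r, hvr, hsr⟩ := htri v s hs
  rcases eq_or_eq_or_eq_of_adj_of_degree_eq_three (h3 v) hvu hvt hs hut.ne (Ne.symm hsut.1)
    (Ne.symm hsut.2) hvr with rfl | rfl | rfl
  · rcases hNu hsr.symm with rfl | rfl | rfl
    exacts [G.irrefl hs, hvw hs, hsut.2 rfl]
  · rcases hNt hsr.symm with rfl | rfl | rfl
    exacts [hsut.1 rfl, G.irrefl hs, hvw hs]
  · exact G.irrefl hsr

lemma liveLeaves_singleton_eq_empty (h3 : ∀ v, G.degree v = 3)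
    (htri : ∀ x y, G.Adj x y → ∃ z, G.Adj x z ∧ G.Adj y z) : G.liveLeaves {v} = ∅ := by
  refine eq_empty_of_forall_notMem fun x hx => ?_
  obtain ⟨hxS, hxv, y, hy⟩ := mem_liveLeaves.1 hx
  obtain ⟨hxy, hyS⟩ := mem_outsideNbrs.1 hy
  obtain ⟨d, hd, hdx⟩ := exists_adj_of_mem_closedNbhd hxS hxv
  rw [mem_singleton] at hd
  subst hd
  by_cases hyv : y = d
  · exact hyS (by rw [hyv]; exact subset_closedNbhd (mem_singleton_self d))
  · exact hyS (mem_closedNbhd_of_adj (mem_singleton_self d)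
      (adj_of_adj_of_adj h3 htri hdx hxy hyv))

/-- The three starting configurations: a star at a vertex of degree at least `4`, a double
star at an edge in no triangle, and, when neither exists, a single vertex of a `K₄`. -/
lemma exists_connected_six_le_leafPotential (hG : G.Connected) (hdeg : ∀ v, 3 ≤ G.degree v) :
    ∃ D : Finset V, (G.induce (D : Set V)).Connected ∧ 6 ≤ G.leafPotential D ∧
      (G.closedNbhd D = univ → 8 ≤ G.leafPotential D) := by
  by_cases h4 : ∃ v, 4 ≤ G.degree v
  · obtain ⟨v, hv⟩ := h4
    refine ⟨{v}, induce_singleton_connected v, six_le_leafPotential ?_⟩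
    rw [card_closedNbhd_singleton, card_singleton]
    omega
  push Not at h4
  have h3 : ∀ v, G.degree v = 3 := fun v => by linarith [h4 v, hdeg v]
  by_cases htri : ∀ x y, G.Adj x y → ∃ z, G.Adj x z ∧ G.Adj y z
  · obtain ⟨v⟩ := hG.nonempty
    refine ⟨{v}, induce_singleton_connected v, ?_⟩
    simp only [leafPotential, liveLeaves_singleton_eq_empty h3 htri, card_closedNbhd_singleton,
      h3 v, card_singleton, card_empty]
    norm_num
  push Not at htri
  obtain ⟨x, y, hxy, hxy'⟩ := htri
  refine ⟨{x, y}, coe_pair (a := x) (b := y) ▸ induce_pair_connected_of_adj hxy,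
    six_le_leafPotential ?_⟩
  have hsub : G.neighborFinset x ∪ G.neighborFinset y ⊆ G.closedNbhd {x, y} := by
    intro z
    simp only [mem_union, mem_neighborFinset]
    rintro (h | h)
    exacts [mem_closedNbhd_of_adj (mem_insert_self x _) h,
      mem_closedNbhd_of_adj (mem_insert_of_mem (mem_singleton_self y)) h]
  have hdisj : Disjoint (G.neighborFinset x) (G.neighborFinset y) :=
    Finset.disjoint_left.2 fun z hx hy => hxy' z ((mem_neighborFinset _ _ _).1 hx)
      ((mem_neighborFinset _ _ _).1 hy)
  have := card_le_card hsub
  rw [card_union_of_disjoint hdisj, card_neighborFinset_eq_degree, card_neighborFinset_eq_degree,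
    h3, h3] at this
  rw [card_pair hxy.ne]
  omega

lemma exists_connected_closedNbhd_eq_univ_eight_le (hG : G.Connected)
    (hdeg : ∀ v, 3 ≤ G.degree v) :
    ∃ D : Finset V, (G.induce (D : Set V)).Connected ∧ G.closedNbhd D = univ ∧
      8 ≤ 3 * (Fintype.card V : ℤ) - 4 * #D := by
  obtain ⟨D₀, hD₀, h6, h8⟩ := exists_connected_six_le_leafPotential hG hdeg
  obtain ⟨D, hD, hdom, hle, hlt⟩ := exists_connected_closedNbhd_eq_univ hG hdeg hD₀
  refine ⟨D, hD, hdom, ?_⟩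
  rw [← card_univ, ← hdom, ← leafPotential_eq_of_closedNbhd_eq_univ hdom]
  by_cases hS₀ : G.closedNbhd D₀ = univ
  · linarith [h8 hS₀]
  · linarith [hlt hS₀]

end SimpleGraph

theorem stmt_4 {V : Type*} [Fintype V] (G : SimpleGraph V)
    (hconn : G.Connected) (hdeg : ∀ v : V, 3 ≤ ndeg G v) :
    ∃ T : SimpleGraph V, IsSpanningTreeOf T G ∧
      (Fintype.card V : ℝ) / 4 + 2 ≤ (numLeaves T : ℝ) := by
  classical
  obtain ⟨D, hD, hdom, hD8⟩ := exists_connected_closedNbhd_eq_univ_eight_le hconn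
    fun v => ndeg_eq_degree G v ▸ hdeg v
  obtain ⟨T, hTG, hT, hleaf⟩ := exists_isTree_le_ndeg_eq_one hD
    fun v hv => exists_adj_of_mem_closedNbhd (hdom ▸ mem_univ v) hv
  refine ⟨T, ⟨hTG, hT⟩, ?_⟩
  have hleaves := card_compl_le_numLeaves hleaf
  rw [card_compl] at hleaves
  have hcard : #D ≤ Fintype.card V := card_le_univ D
  have h : Fintype.card V + 8 ≤ 4 * numLeaves T := by omega
  have h' : (Fintype.card V : ℝ) + 8 ≤ 4 * numLeaves T := by exact_mod_cast h
  linarith
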